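/- arXiv:2212.08247 — 8 statements merged into one kernel-verified Lean document; each statement's English description precedes it below -/
import Mathlib

section
/- Let Â and A_i be r×r real matrices, B_i an r×m real matrix, Ĉ an m×r real matrix, and t_d a real number. Assume A_i = Â + B_i Ĉ, and assume the linear map sending an r×r real matrix X to A_i X − X Â is injective. If an r×r real matrix E_2 satisfies A_i E_2 − E_2 Â = B_i Ĉ exp(Â t_d) − exp(A_i t_d) B_i Ĉ, then E_2 = exp(Â t_d) − exp(A_i t_d). -/
open Matrix NormedSpace

theorem Commute.mul_sub_sub_mul_eq {R : Type*} [Ring R] {A Â P Q : R}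
    (hP : Commute Â P) (hQ : Commute A Q) :
    A * (P - Q) - (P - Q) * Â = (A - Â) * P - Q * (A - Â) := by
  simp only [mul_sub, sub_mul, hP.eq, hQ.eq]
  abel

theorem commute_self_exp_smul {R 𝔸 : Type*} [CommSemiring R] [Ring 𝔸] [Algebra R 𝔸]
    [TopologicalSpace 𝔸] [IsTopologicalRing 𝔸] [T2Space 𝔸] (a : 𝔸) (t : R) :
    Commute a (exp (t • a)) :=
  ((Commute.refl a).smul_right t).exp_right

/-- **Proposition 1.** If the Sylvester operator `X ↦ A_i X − X Â` is injective and
`E₂` satisfies `A_i E₂ − E₂ Â = B_i Ĉ exp(Â t_d) − exp(A_i t_d) B_i Ĉ`, then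
`E₂ = exp(Â t_d) − exp(A_i t_d)`. -/
theorem E2_unique_solution {r m : ℕ}
    (Ahat Ai : Matrix (Fin r) (Fin r) ℝ)
    (Bi : Matrix (Fin r) (Fin m) ℝ) (Chat : Matrix (Fin m) (Fin r) ℝ)
    (td : ℝ) (hAi : Ai = Ahat + Bi * Chat)
    (hinj : Function.Injective fun X : Matrix (Fin r) (Fin r) ℝ => Ai * X - X * Ahat)
    (E2 : Matrix (Fin r) (Fin r) ℝ)
    (hE2 : Ai * E2 - E2 * Ahat =
      Bi * Chat * exp (td • Ahat) - exp (td • Ai) * (Bi * Chat)) :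
    E2 = exp (td • Ahat) - exp (td • Ai) := by
  have hgap : Ai - Ahat = Bi * Chat := by rw [hAi, add_sub_cancel_left]
  apply hinj
  simp only [hE2, (commute_self_exp_smul Ahat td).mul_sub_sub_mul_eq
    (commute_self_exp_smul Ai td), hgap]
end

section
/- Let Â, A_i, E_2, Q_23, Q_33 be r×r real matrices, B_i an r×m real matrix, Ĉ and C_i m×r real matrices, D_i an m×m real matrix, and t_d a real number. Assume: A_i = Â + B_i Ĉ; C_i = D_i Ĉ; E_2 = exp(Â t_d) − exp(A_i t_d); Âᵀ Q_23 + Q_23 A_i + L_23 = 0 where L_23 = −Ĉᵀ B_iᵀ Q_33 − Ĉᵀ D_iᵀ C_i + exp(Âᵀ t_d) Ĉᵀ D_iᵀ C_i exp(A_i t_d) − E_2ᵀ C_iᵀ C_i exp(A_i t_d); A_iᵀ Q_33 + Q_33 A_i + L_33 = 0 where L_33 = C_iᵀ C_i − exp(A_iᵀ t_d) C_iᵀ C_i exp(A_i t_d); and the linear map sending an r×r real matrix X to Âᵀ X + X A_i is injective. Then Q_23 = −Q_33. -/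
open Matrix NormedSpace

/-!
Both `Âᵀ Q₂₃ + Q₂₃ A_i` and `Âᵀ (-Q₃₃) + (-Q₃₃) A_i` equal `Ĉᵀ B_iᵀ Q₃₃ + L₃₃`: for `-Q₃₃` this is
the Lyapunov equation for `Q₃₃` after writing `A_iᵀ = Âᵀ + Ĉᵀ B_iᵀ`, and for `Q₂₃` it is its
Sylvester equation once `Ĉᵀ D_iᵀ = C_iᵀ` and `E₂ᵀ = exp(Â t_d)ᵀ - exp(A_i t_d)ᵀ` turn `L₂₃` into
`-Ĉᵀ B_iᵀ Q₃₃ - L₃₃`. Injectivity of the Sylvester operator then gives `Q₂₃ = -Q₃₃`.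
-/

namespace Matrix

variable {R n m : Type*} [CommRing R] [Fintype n] [Fintype m]

theorem sylvester_forcing_eq_neg_lyapunov_forcing (P S : Matrix n n R) (C : Matrix m n R)
    (D : Matrix m m R) :
    -(Cᵀ * Dᵀ * (D * C)) + Pᵀ * Cᵀ * Dᵀ * (D * C) * S
        - (P - S)ᵀ * (D * C)ᵀ * (D * C) * S
      = -((D * C)ᵀ * (D * C) - Sᵀ * (D * C)ᵀ * (D * C) * S) := by
  simp only [transpose_sub, transpose_mul, Matrix.sub_mul, Matrix.mul_assoc]
  abel

end Matrix

/-- **First part of Proposition 2.** Under the displayed Sylvester/Lyapunov equations for the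
gramian blocks `Q₂₃`, `Q₃₃` and uniqueness of the Sylvester operator `X ↦ Âᵀ X + X A_i`,
we have `Q₂₃ = −Q₃₃`. -/
theorem Q23_eq_neg_Q33 {r m : ℕ}
    (Ahat Ai E2 Q23 Q33 : Matrix (Fin r) (Fin r) ℝ)
    (Bi : Matrix (Fin r) (Fin m) ℝ) (Chat Ci : Matrix (Fin m) (Fin r) ℝ)
    (Di : Matrix (Fin m) (Fin m) ℝ) (td : ℝ)
    (hAi : Ai = Ahat + Bi * Chat)
    (hCi : Ci = Di * Chat)
    (hE2 : E2 = exp (td • Ahat) - exp (td • Ai))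
    (hQ23 : Ahatᵀ * Q23 + Q23 * Ai +
      (-(Chatᵀ * Biᵀ * Q33) - Chatᵀ * Diᵀ * Ci
        + exp (td • Ahatᵀ) * Chatᵀ * Diᵀ * Ci * exp (td • Ai)
        - E2ᵀ * Ciᵀ * Ci * exp (td • Ai)) = 0)
    (hQ33 : Aiᵀ * Q33 + Q33 * Ai +
      (Ciᵀ * Ci - exp (td • Aiᵀ) * Ciᵀ * Ci * exp (td • Ai)) = 0)
    (hinj : Function.Injective fun X : Matrix (Fin r) (Fin r) ℝ => Ahatᵀ * X + X * Ai) :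
    Q23 = -Q33 := by
  have hAiT : Aiᵀ = Ahatᵀ + Chatᵀ * Biᵀ := by rw [hAi, transpose_add, transpose_mul]
  rw [← transpose_smul, exp_transpose] at hQ23 hQ33
  rw [hAiT, Matrix.add_mul] at hQ33
  subst hCi hE2
  have hL := sylvester_forcing_eq_neg_lyapunov_forcing (exp (td • Ahat)) (exp (td • Ai)) Chat Di
  set L33 := (Di * Chat)ᵀ * (Di * Chat)
    - (exp (td • Ai))ᵀ * (Di * Chat)ᵀ * (Di * Chat) * exp (td • Ai)
  have hQ23' : Ahatᵀ * Q23 + Q23 * Ai = Chatᵀ * Biᵀ * Q33 + L33 := by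
    linear_combination (norm := abel) hQ23 - hL
  have hQ33' : Ahatᵀ * Q33 + Q33 * Ai = -(Chatᵀ * Biᵀ * Q33 + L33) := by
    linear_combination (norm := abel) hQ33
  apply hinj
  simp only [Matrix.mul_neg, Matrix.neg_mul, ← neg_add, hQ23', hQ33', neg_neg]
end

section
/- Let Â, A_i, E_2, Q_22, Q_23, Q_33 be r×r real matrices, B_i an r×m real matrix, Ĉ and C_i m×r real matrices, D_i an m×m real matrix, and t_d a real number. Assume: A_i = Â + B_i Ĉ; C_i = D_i Ĉ; E_2 = exp(Â t_d) − exp(A_i t_d); Q_23 = −Q_33; Âᵀ Q_22 + Q_22 Â + L_22 = 0 where L_22 = −Ĉᵀ B_iᵀ Q_23 − Q_23 B_i Ĉ + Ĉᵀ D_iᵀ D_i Ĉ − exp(Âᵀ t_d) Ĉᵀ D_iᵀ D_i Ĉ exp(Â t_d) + E_2ᵀ C_iᵀ D_i Ĉ exp(Â t_d) + exp(Âᵀ t_d) Ĉᵀ D_iᵀ C_i E_2 − E_2ᵀ C_iᵀ C_i E_2; A_iᵀ Q_33 + Q_33 A_i + L_33 = 0 where L_33 = C_iᵀ C_i − exp(A_iᵀ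 t_d) C_iᵀ C_i exp(A_i t_d); and the linear map sending an r×r real matrix X to Âᵀ X + X Â is injective. Then Q_22 = Q_33. -/
open Matrix NormedSpace

/-! With `P = exp(t_d Â)` and `Pᵢ = exp(t_d Aᵢ)`, the identity `Cᵢ E₂ = Cᵢ P − Cᵢ Pᵢ` lets the
last four terms of `L₂₂` complete the square to `−(Cᵢ Pᵢ)ᵀ (Cᵢ Pᵢ)`, so that (with `Q₂₃ = −Q₃₃`)
`L₂₂ = Ĉᵀ Bᵢᵀ Q₃₃ + Q₃₃ Bᵢ Ĉ + L₃₃`. Since `Aᵢ = Â + Bᵢ Ĉ`, the Lyapunov equation for `Q₃₃`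
then says `Âᵀ Q₃₃ + Q₃₃ Â = −L₂₂ = Âᵀ Q₂₂ + Q₂₂ Â`, and injectivity gives `Q₂₂ = Q₃₃`. -/

theorem Matrix.transpose_sub_mul_sub {m n R : Type*} [Fintype m] [CommRing R]
    (X Y : Matrix m n R) : (X - Y)ᵀ * (X - Y) = Xᵀ * X - Yᵀ * X - Xᵀ * Y + Yᵀ * Y := by
  simp only [transpose_sub, Matrix.sub_mul, Matrix.mul_sub]
  abel

/-- **Second part of Proposition 2.** Under the displayed Lyapunov equations for the gramian
blocks `Q₂₂`, `Q₃₃`, the relation `Q₂₃ = −Q₃₃`, and uniqueness of the Lyapunov operator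
`X ↦ Âᵀ X + X Â`, we have `Q₂₂ = Q₃₃`. -/
theorem Q22_eq_Q33 {r m : ℕ}
    (Ahat Ai E2 Q22 Q23 Q33 : Matrix (Fin r) (Fin r) ℝ)
    (Bi : Matrix (Fin r) (Fin m) ℝ) (Chat Ci : Matrix (Fin m) (Fin r) ℝ)
    (Di : Matrix (Fin m) (Fin m) ℝ) (td : ℝ)
    (hAi : Ai = Ahat + Bi * Chat)
    (hCi : Ci = Di * Chat)
    (hE2 : E2 = exp (td • Ahat) - exp (td • Ai))
    (hQ23 : Q23 = -Q33)
    (hQ22 : Ahatᵀ * Q22 + Q22 * Ahat +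
      (-(Chatᵀ * Biᵀ * Q23) - Q23 * Bi * Chat + Chatᵀ * Diᵀ * Di * Chat
        - exp (td • Ahatᵀ) * Chatᵀ * Diᵀ * Di * Chat * exp (td • Ahat)
        + E2ᵀ * Ciᵀ * Di * Chat * exp (td • Ahat)
        + exp (td • Ahatᵀ) * Chatᵀ * Diᵀ * Ci * E2
        - E2ᵀ * Ciᵀ * Ci * E2) = 0)
    (hQ33 : Aiᵀ * Q33 + Q33 * Ai +
      (Ciᵀ * Ci - exp (td • Aiᵀ) * Ciᵀ * Ci * exp (td • Ai)) = 0)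
    (hinj : Function.Injective fun X : Matrix (Fin r) (Fin r) ℝ => Ahatᵀ * X + X * Ahat) :
    Q22 = Q33 := by
  apply hinj
  beta_reduce
  have hCiPi : Ci * exp (td • Ai) = Ci * exp (td • Ahat) - Ci * E2 := by
    rw [hE2, Matrix.mul_sub, sub_sub_cancel]
  have hsquare := transpose_sub_mul_sub (Ci * exp (td • Ahat)) (Ci * E2)
  rw [← hCiPi] at hsquare
  simp only [← transpose_smul, exp_transpose] at hQ22 hQ33
  subst hAi hCi hQ23
  simp only [transpose_mul, transpose_add, Matrix.mul_assoc, Matrix.mul_add, Matrix.add_mul,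
    Matrix.mul_neg, Matrix.neg_mul] at hsquare hQ22 hQ33 ⊢
  linear_combination (norm := abel) hQ22 - hQ33 - hsquare
end

section
/- Let A be an n×n real matrix and C an m×n real matrix; let Â, A_i, E_2, Q_23, Q_33 be r×r real matrices, B_i an r×m real matrix, Ĉ and C_i m×r real matrices, D_i an m×m real matrix, E_1 an r×n real matrix, Q_12 and Q_13 n×r real matrices, and t_d a real number. Assume: A_i = Â + B_i Ĉ; C_i = D_i Ĉ; E_2 = exp(Â t_d) − exp(A_i t_d); Q_23 = −Q_33; Aᵀ Q_12 + Q_12 Â + L_12 = 0 where L_12 = Cᵀ B_iᵀ Q_23 − Q_13 B_i Ĉ − Cᵀ D_iᵀ D_i Ĉ + exp(Aᵀ t_d) Cᵀ D_iᵀ D_i Ĉ exp(Â t_d) + E_1ᵀ C_iᵀ D_i Ĉ exp(Â t_d) − exp(Aᵀ t_d) Cᵀ D_iᵀ C_i E_2 − E_1ᵀ C_iᵀ C_i E_2; Aᵀ Q_13 + Q_13 A_i + L_13 = 0 where L_13 = Cᵀ B_iᵀ Q_33 + Cᵀ D_iᵀ C_i − exp(Aᵀ t_d) Cᵀ D_iᵀ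 C_i exp(A_i t_d) − E_1ᵀ C_iᵀ C_i exp(A_i t_d); and the linear map sending an n×r real matrix X to Aᵀ X + X Â is injective. Then Q_12 = −Q_13. -/
/-!
Adding the two Sylvester equations, the coupling terms cancel: `Q₁₃ B_i Ĉ` against
`Q₁₃ (A_i − Â)`, `Q₂₃` against `Q₃₃`, and, since `C_i = D_i Ĉ` and
`exp(Â t_d) − E₂ = exp(A_i t_d)`, the remaining terms in pairs. What is left is
`S Q₁₂ + S Q₁₃ = 0` for the Sylvester operator `S X = Aᵀ X + X Â`, which is additive, so
injectivity of `S` gives `Q₁₂ = −Q₁₃`.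
-/

open Matrix NormedSpace

theorem Matrix.eq_neg_of_sylvester_add_sylvester_eq_zero {m n R : Type*} [Fintype m] [Fintype n]
    [Ring R] {P : Matrix m m R} {Q : Matrix n n R}
    (hinj : Function.Injective fun X : Matrix m n R => P * X + X * Q) {X Y : Matrix m n R}
    (h : P * X + X * Q + (P * Y + Y * Q) = 0) : X = -Y :=
  hinj <| by
    simp only [Matrix.mul_neg, Matrix.neg_mul, ← neg_add]
    exact eq_neg_of_add_eq_zero_left h

/-- **Third part of Proposition 2.** Under the displayed Sylvester equations for the gramian
blocks `Q₁₂`, `Q₁₃`, the relation `Q₂₃ = −Q₃₃`, and uniqueness of the Sylvester operator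
`X ↦ Aᵀ X + X Â`, we have `Q₁₂ = −Q₁₃`. -/
theorem Q12_eq_neg_Q13 {n r m : ℕ}
    (A : Matrix (Fin n) (Fin n) ℝ) (C : Matrix (Fin m) (Fin n) ℝ)
    (Ahat Ai E2 Q23 Q33 : Matrix (Fin r) (Fin r) ℝ)
    (Bi : Matrix (Fin r) (Fin m) ℝ) (Chat Ci : Matrix (Fin m) (Fin r) ℝ)
    (Di : Matrix (Fin m) (Fin m) ℝ)
    (E1 : Matrix (Fin r) (Fin n) ℝ) (Q12 Q13 : Matrix (Fin n) (Fin r) ℝ)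
    (td : ℝ)
    (hAi : Ai = Ahat + Bi * Chat)
    (hCi : Ci = Di * Chat)
    (hE2 : E2 = exp (td • Ahat) - exp (td • Ai))
    (hQ23 : Q23 = -Q33)
    (hQ12 : Aᵀ * Q12 + Q12 * Ahat +
      (Cᵀ * Biᵀ * Q23 - Q13 * Bi * Chat - Cᵀ * Diᵀ * Di * Chat
        + exp (td • Aᵀ) * Cᵀ * Diᵀ * Di * Chat * exp (td • Ahat)
        + E1ᵀ * Ciᵀ * Di * Chat * exp (td • Ahat)
        - exp (td • Aᵀ) * Cᵀ * Diᵀ * Ci * E2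
        - E1ᵀ * Ciᵀ * Ci * E2) = 0)
    (hQ13 : Aᵀ * Q13 + Q13 * Ai +
      (Cᵀ * Biᵀ * Q33 + Cᵀ * Diᵀ * Ci
        - exp (td • Aᵀ) * Cᵀ * Diᵀ * Ci * exp (td • Ai)
        - E1ᵀ * Ciᵀ * Ci * exp (td • Ai)) = 0)
    (hinj : Function.Injective fun X : Matrix (Fin n) (Fin r) ℝ => Aᵀ * X + X * Ahat) :
    Q12 = -Q13 := by
  refine eq_neg_of_sylvester_add_sylvester_eq_zero hinj ?_
  subst hAi hCi hE2 hQ23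
  linear_combination (norm := skip) hQ12 + hQ13
  simp only [Matrix.mul_add, Matrix.mul_sub, Matrix.mul_neg, Matrix.mul_assoc]
  abel
end

section
/- Let A be an n×n real matrix, B an n×m real matrix, and t_1 ≤ t_2 real numbers. Then the matrix P = ∫_{t_1}^{t_2} exp(Aτ) B Bᵀ exp(Aᵀτ) dτ satisfies the Lyapunov equation A P + P Aᵀ + exp(A t_1) B Bᵀ exp(Aᵀ t_1) − exp(A t_2) B Bᵀ exp(Aᵀ t_2) = 0. -/
/-!
`F τ = exp(τA) B Bᵀ exp(τAᵀ)` solves the matrix ODE `F' = A F + F Aᵀ`, so integrating it over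
`[t₁, t₂]` and pulling the constant factors `A` and `Aᵀ` out of the integral gives
`A P + P Aᵀ = F t₂ - F t₁` by the fundamental theorem of calculus.
-/

open Matrix NormedSpace

section BanachAlgebra

variable {𝔸 : Type*} [NormedRing 𝔸] [NormedAlgebra ℝ 𝔸] [CompleteSpace 𝔸]

theorem hasDerivAt_exp_smul_mul_mul_exp_smul (a b c : 𝔸) (t : ℝ) :
    HasDerivAt (fun τ : ℝ => exp (τ • a) * c * exp (τ • b))
      (a * (exp (t • a) * c * exp (t • b)) + exp (t • a) * c * exp (t • b) * b) t := by
  refine (((hasDerivAt_exp_smul_const' a t).mul_const c).mul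
    (hasDerivAt_exp_smul_const b t)).congr_deriv ?_
  noncomm_ring

theorem mul_intervalIntegral_add_intervalIntegral_mul {f : ℝ → 𝔸} (a b : 𝔸)
    (hf : ∀ t, HasDerivAt f (a * f t + f t * b) t) (t₁ t₂ : ℝ) :
    a * (∫ τ in t₁..t₂, f τ) + (∫ τ in t₁..t₂, f τ) * b = f t₂ - f t₁ := by
  have hcont : Continuous f := continuous_iff_continuousAt.2 fun t => (hf t).continuousAt
  have hint : IntervalIntegrable f MeasureTheory.volume t₁ t₂ := hcont.intervalIntegrable _ _
  have hmul_left : ∫ τ in t₁..t₂, a * f τ = a * ∫ τ in t₁..t₂, f τ :=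
    (ContinuousLinearMap.mul ℝ 𝔸 a).intervalIntegral_comp_comm hint
  have hmul_right : ∫ τ in t₁..t₂, f τ * b = (∫ τ in t₁..t₂, f τ) * b :=
    ((ContinuousLinearMap.mul ℝ 𝔸).flip b).intervalIntegral_comp_comm hint
  have hleft : Continuous fun τ => a * f τ := continuous_const.mul hcont
  have hright : Continuous fun τ => f τ * b := hcont.mul continuous_const
  rw [← hmul_left, ← hmul_right, ← intervalIntegral.integral_add
      (hleft.intervalIntegrable _ _) (hright.intervalIntegrable _ _)]
  exact intervalIntegral.integral_eq_sub_of_hasDerivAt (fun t _ => hf t)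
    ((hleft.add hright).intervalIntegrable _ _)

end BanachAlgebra

-- The entrywise integral does not depend on the norm; this one makes matrices a Banach algebra.
attribute [local instance] Matrix.linftyOpNormedAddCommGroup Matrix.linftyOpNormedSpace
  Matrix.linftyOpNormedRing Matrix.linftyOpNormedAlgebra

theorem Matrix.of_intervalIntegral_apply {ι κ : Type*} [Fintype ι] [Fintype κ]
    {f : ℝ → Matrix ι κ ℝ} (hf : Continuous f) (t₁ t₂ : ℝ) :
    (of fun i j => ∫ τ in t₁..t₂, f τ i j) = ∫ τ in t₁..t₂, f τ := by
  ext i j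
  exact (entryLinearMap ℝ ℝ i j).toContinuousLinearMap.intervalIntegral_comp_comm
    (hf.intervalIntegrable t₁ t₂)

theorem timeLimited_controllability_gramian_lyapunov_general {n m : ℕ}
    (A : Matrix (Fin n) (Fin n) ℝ) (B : Matrix (Fin n) (Fin m) ℝ)
    (t₁ t₂ : ℝ)
    (P : Matrix (Fin n) (Fin n) ℝ)
    (hP : P = Matrix.of fun i j =>
      ∫ τ in t₁..t₂, (exp (τ • A) * B * Bᵀ * exp (τ • Aᵀ)) i j) :
    A * P + P * Aᵀ + exp (t₁ • A) * B * Bᵀ * exp (t₁ • Aᵀ)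
      - exp (t₂ • A) * B * Bᵀ * exp (t₂ • Aᵀ) = 0 := by
  have hF : ∀ τ : ℝ, exp (τ • A) * B * Bᵀ * exp (τ • Aᵀ)
      = exp (τ • A) * (B * Bᵀ) * exp (τ • Aᵀ) := fun τ => by rw [Matrix.mul_assoc _ B]
  have hderiv := hasDerivAt_exp_smul_mul_mul_exp_smul A Aᵀ (B * Bᵀ)
  have hcont : Continuous fun τ : ℝ => exp (τ • A) * (B * Bᵀ) * exp (τ • Aᵀ) :=
    continuous_iff_continuousAt.2 fun t => (hderiv t).continuousAt
  have hsylvester : A * (∫ τ in t₁..t₂, exp (τ • A) * (B * Bᵀ) * exp (τ • Aᵀ))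
      + (∫ τ in t₁..t₂, exp (τ • A) * (B * Bᵀ) * exp (τ • Aᵀ)) * Aᵀ
      = exp (t₂ • A) * (B * Bᵀ) * exp (t₂ • Aᵀ) - exp (t₁ • A) * (B * Bᵀ) * exp (t₁ • Aᵀ) :=
    mul_intervalIntegral_add_intervalIntegral_mul A Aᵀ hderiv t₁ t₂
  simp only [hF] at hP ⊢
  rw [hP, Matrix.of_intervalIntegral_apply hcont, hsylvester]
  abel

/-- The time-limited controllability gramian
`P = ∫_{t₁}^{t₂} exp(Aτ) B Bᵀ exp(Aᵀτ) dτ` (entrywise integral) satisfies the Lyapunov equation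
`A P + P Aᵀ + exp(A t₁) B Bᵀ exp(Aᵀ t₁) − exp(A t₂) B Bᵀ exp(Aᵀ t₂) = 0`. -/
theorem timeLimited_controllability_gramian_lyapunov {n m : ℕ}
    (A : Matrix (Fin n) (Fin n) ℝ) (B : Matrix (Fin n) (Fin m) ℝ)
    (t₁ t₂ : ℝ) (ht : t₁ ≤ t₂)
    (P : Matrix (Fin n) (Fin n) ℝ)
    (hP : P = Matrix.of fun i j =>
      ∫ τ in t₁..t₂, (exp (τ • A) * B * Bᵀ * exp (τ • Aᵀ)) i j) :
    A * P + P * Aᵀ + exp (t₁ • A) * B * Bᵀ * exp (t₁ • Aᵀ)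
      - exp (t₂ • A) * B * Bᵀ * exp (t₂ • Aᵀ) = 0 :=
  timeLimited_controllability_gramian_lyapunov_general A B t₁ t₂ P hP
end

section
/- Let A be an n×n real matrix, F an r×r real matrix, G and X n×r real matrices, and t_d a real number. If A X + X F + G = 0, then the matrix P := X − exp(A t_d) X exp(F t_d) satisfies A P + P F + G − exp(A t_d) G exp(F t_d) = 0. -/
open Matrix NormedSpace

section Sylvester

variable {m n R : Type*} [Fintype m] [Fintype n] [Ring R]

theorem Matrix.sylvester_mul_mul_of_commute {A S : Matrix m m R} {F T : Matrix n n R}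
    (hA : Commute A S) (hF : Commute F T) (X : Matrix m n R) :
    A * (S * X * T) + S * X * T * F = S * (A * X + X * F) * T := by
  simp only [Matrix.mul_add, Matrix.add_mul, ← Matrix.mul_assoc, hA.eq]
  simp only [Matrix.mul_assoc, hF.eq]

theorem Matrix.sylvester_sub_mul_mul_of_commute {A S : Matrix m m R} {F T : Matrix n n R}
    (hA : Commute A S) (hF : Commute F T) {G X : Matrix m n R}
    (hX : A * X + X * F + G = 0) :
    A * (X - S * X * T) + (X - S * X * T) * F + G - S * G * T = 0 := by
  have hSXT : A * (S * X * T) + S * X * T * F + S * G * T = 0 := by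
    rw [sylvester_mul_mul_of_commute hA hF, ← Matrix.add_mul, ← Matrix.mul_add, hX,
      Matrix.mul_zero, Matrix.zero_mul]
  calc A * (X - S * X * T) + (X - S * X * T) * F + G - S * G * T
      = (A * X + X * F + G) - (A * (S * X * T) + S * X * T * F + S * G * T) := by
        rw [Matrix.mul_sub, Matrix.sub_mul]; abel
    _ = 0 := by rw [hX, hSXT, sub_zero]

end Sylvester

/-- If `X` solves the infinite-horizon Sylvester equation `A X + X F + G = 0`, then
`P = X − exp(A t_d) X exp(F t_d)` solves the time-limited Sylvester equation
`A P + P F + G − exp(A t_d) G exp(F t_d) = 0`. -/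
theorem timeLimited_sylvester_from_infinite {n r : ℕ}
    (A : Matrix (Fin n) (Fin n) ℝ) (F : Matrix (Fin r) (Fin r) ℝ)
    (G X : Matrix (Fin n) (Fin r) ℝ) (td : ℝ)
    (hX : A * X + X * F + G = 0) :
    A * (X - exp (td • A) * X * exp (td • F))
      + (X - exp (td • A) * X * exp (td • F)) * F
      + G - exp (td • A) * G * exp (td • F) = 0 :=
  Matrix.sylvester_sub_mul_mul_of_commute
    ((Commute.refl A).smul_right td).exp_right
    ((Commute.refl F).smul_right td).exp_right hX
end

section
/- Let A be an n×n complex matrix, B an n×m complex matrix, C an m×n complex matrix; let Â be an r×r complex matrix, B̂ an r×m complex matrix, Ĉ an m×r complex matrix, and D an invertible m×m complex matrix. Set A_i = Â − B̂ D⁻¹ Ĉ, B_i = −B̂ D⁻¹, C_i = D⁻¹ Ĉ, D_i = D⁻¹. Let A_rel be the (n+r+r)×(n+r+r) block matrix with block rows [[A, 0, 0], [0, Â, 0], [B_i C, −B_i Ĉ, A_i]], let B_rel be the block column [B; B̂; 0], and let C_rel be the block row [D_i C, −D_i Ĉ, C_i]. Let s be a complex number such that sI − A, sI − Â, sI − A_i,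 and sI − A_rel are all invertible. Then C_rel (sI − A_rel)⁻¹ B_rel = (D⁻¹ − D⁻¹ Ĉ (sI − A_i)⁻¹ B̂ D⁻¹) · (C (sI − A)⁻¹ B − Ĉ (sI − Â)⁻¹ B̂). -/
/-!
The resolvent of a block lower-triangular matrix is again block lower-triangular, with an explicit
off-diagonal block. Hence the transfer matrix of a parallel connection of two realizations is the
sum, and that of a series connection the product, of the two transfer matrices. `A_rel` is the
series connection of the parallel realization `(diag(A, Â), [B; B̂], [C, −Ĉ], 0)` of
`Δ_add = H − Ĥ` with `(A_i, B_i, C_i, D_i)`, whose transfer matrix is the first factor.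
-/

open Matrix

namespace Matrix

variable {R : Type*} [CommRing R] {l n : Type*} [DecidableEq l] [DecidableEq n]

theorem smul_one_sub_fromBlocks_zero₁₂ (s : R) (A : Matrix l l R) (C : Matrix n l R)
    (D : Matrix n n R) :
    s • 1 - fromBlocks A 0 C D = fromBlocks (s • 1 - A) 0 (-C) (s • 1 - D) := by
  ext (i | i) (j | j) <;> simp [one_apply]

variable [Fintype l] [Fintype n] {s : R} {A : Matrix l l R} {D : Matrix n n R}

theorem isUnit_smul_one_sub_fromBlocks_zero₁₂ {C : Matrix n l R} :
    IsUnit (s • 1 - fromBlocks A 0 C D) ↔ IsUnit (s • 1 - A) ∧ IsUnit (s • 1 - D) := by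
  rw [smul_one_sub_fromBlocks_zero₁₂, isUnit_fromBlocks_zero₁₂]

theorem inv_smul_one_sub_fromBlocks_zero₁₂ (hA : IsUnit (s • 1 - A)) (hD : IsUnit (s • 1 - D))
    (C : Matrix n l R) :
    (s • 1 - fromBlocks A 0 C D)⁻¹ =
      fromBlocks (s • 1 - A)⁻¹ 0 ((s • 1 - D)⁻¹ * C * (s • 1 - A)⁻¹) (s • 1 - D)⁻¹ := by
  rw [smul_one_sub_fromBlocks_zero₁₂,
    inv_fromBlocks_zero₁₂_of_isUnit_iff _ _ _ (iff_of_true hA hD), Matrix.mul_neg,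
    Matrix.neg_mul, neg_neg]

end Matrix

noncomputable def transferMatrix {R : Type*} [CommRing R] {n p q : Type*} [Fintype n]
    [DecidableEq n] (A : Matrix n n R) (B : Matrix n p R) (C : Matrix q n R) (D : Matrix q p R)
    (s : R) : Matrix q p R :=
  C * (s • 1 - A)⁻¹ * B + D

section Interconnection

variable {R : Type*} [CommRing R] {l n p q r : Type*} [Fintype l] [Fintype n]
  [DecidableEq l] [DecidableEq n] {A₁ : Matrix l l R} {A₂ : Matrix n n R} {s : R}

theorem transferMatrix_parallel (h₁ : IsUnit (s • 1 - A₁)) (h₂ : IsUnit (s • 1 - A₂))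
    (B₁ : Matrix l p R) (C₁ : Matrix q l R) (D₁ : Matrix q p R)
    (B₂ : Matrix n p R) (C₂ : Matrix q n R) (D₂ : Matrix q p R) :
    transferMatrix (fromBlocks A₁ 0 0 A₂) (fromRows B₁ B₂) (fromCols C₁ C₂) (D₁ + D₂) s =
      transferMatrix A₁ B₁ C₁ D₁ s + transferMatrix A₂ B₂ C₂ D₂ s := by
  simp only [transferMatrix, inv_smul_one_sub_fromBlocks_zero₁₂ h₁ h₂, fromCols_mul_fromBlocks,
    fromCols_mul_fromRows, Matrix.mul_zero, Matrix.zero_mul, add_zero, zero_add]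
  abel

theorem transferMatrix_series [Fintype q] (h₁ : IsUnit (s • 1 - A₁)) (h₂ : IsUnit (s • 1 - A₂))
    (B₁ : Matrix l p R) (C₁ : Matrix q l R) (D₁ : Matrix q p R)
    (B₂ : Matrix n q R) (C₂ : Matrix r n R) (D₂ : Matrix r q R) :
    transferMatrix (fromBlocks A₁ 0 (B₂ * C₁) A₂) (fromRows B₁ (B₂ * D₁))
        (fromCols (D₂ * C₁) C₂) (D₂ * D₁) s =
      transferMatrix A₂ B₂ C₂ D₂ s * transferMatrix A₁ B₁ C₁ D₁ s := by
  simp only [transferMatrix, inv_smul_one_sub_fromBlocks_zero₁₂ h₁ h₂, fromCols_mul_fromBlocks,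
    fromCols_mul_fromRows, Matrix.mul_zero, zero_add, Matrix.add_mul, Matrix.mul_add,
    Matrix.mul_assoc]
  abel

end Interconnection

theorem relative_error_realization_general {n r m : ℕ}
    (A : Matrix (Fin n) (Fin n) ℂ) (B : Matrix (Fin n) (Fin m) ℂ)
    (C : Matrix (Fin m) (Fin n) ℂ)
    (Ahat : Matrix (Fin r) (Fin r) ℂ) (Bhat : Matrix (Fin r) (Fin m) ℂ)
    (Chat : Matrix (Fin m) (Fin r) ℂ) (D : Matrix (Fin m) (Fin m) ℂ)
    (Ai : Matrix (Fin r) (Fin r) ℂ) (Bi : Matrix (Fin r) (Fin m) ℂ)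
    (Ci : Matrix (Fin m) (Fin r) ℂ) (Di : Matrix (Fin m) (Fin m) ℂ)
    (hBi : Bi = -(Bhat * D⁻¹))
    (hCi : Ci = D⁻¹ * Chat) (hDi : Di = D⁻¹)
    (Arel : Matrix ((Fin n ⊕ Fin r) ⊕ Fin r) ((Fin n ⊕ Fin r) ⊕ Fin r) ℂ)
    (Brel : Matrix ((Fin n ⊕ Fin r) ⊕ Fin r) (Fin m) ℂ)
    (Crel : Matrix (Fin m) ((Fin n ⊕ Fin r) ⊕ Fin r) ℂ)
    (hArel : Arel = Matrix.fromBlocks (Matrix.fromBlocks A 0 0 Ahat) 0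
      (Matrix.fromCols (Bi * C) (-(Bi * Chat))) Ai)
    (hBrel : Brel = Matrix.fromRows (Matrix.fromRows B Bhat) 0)
    (hCrel : Crel = Matrix.fromCols (Matrix.fromCols (Di * C) (-(Di * Chat))) Ci)
    (s : ℂ)
    (hsA : IsUnit (s • (1 : Matrix (Fin n) (Fin n) ℂ) - A))
    (hsAhat : IsUnit (s • (1 : Matrix (Fin r) (Fin r) ℂ) - Ahat))
    (hsAi : IsUnit (s • (1 : Matrix (Fin r) (Fin r) ℂ) - Ai)) :
    Crel * (s • (1 : Matrix ((Fin n ⊕ Fin r) ⊕ Fin r) ((Fin n ⊕ Fin r) ⊕ Fin r) ℂ) - Arel)⁻¹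
        * Brel =
      (D⁻¹ - D⁻¹ * Chat * (s • (1 : Matrix (Fin r) (Fin r) ℂ) - Ai)⁻¹ * Bhat * D⁻¹) *
        (C * (s • (1 : Matrix (Fin n) (Fin n) ℂ) - A)⁻¹ * B
          - Chat * (s • (1 : Matrix (Fin r) (Fin r) ℂ) - Ahat)⁻¹ * Bhat) := by
  have hsAadd : IsUnit (s • 1 - fromBlocks A 0 0 Ahat) :=
    isUnit_smul_one_sub_fromBlocks_zero₁₂.2 ⟨hsA, hsAhat⟩
  have hcascade := transferMatrix_series hsAadd hsAi (fromRows B Bhat) (fromCols C (-Chat))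
    (0 + 0) Bi Ci Di
  rw [transferMatrix_parallel hsA hsAhat] at hcascade
  simp only [transferMatrix, Matrix.mul_zero, add_zero, Matrix.mul_fromCols, Matrix.mul_neg]
    at hcascade
  rw [hArel, hBrel, hCrel, hcascade, hBi, hCi, hDi]
  congr 1
  · rw [Matrix.mul_neg, ← Matrix.mul_assoc, neg_add_eq_sub]
  · rw [Matrix.neg_mul, Matrix.neg_mul, ← sub_eq_add_neg]

/-- `(A_rel, B_rel, C_rel)` is a state-space realization of the relative error system
`Δ_rel(s) = Ĥ(s)⁻¹ Δ_add(s)`: for every `s` making all displayed resolvents invertible,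
`C_rel (sI − A_rel)⁻¹ B_rel = (D⁻¹ − D⁻¹ Ĉ (sI − A_i)⁻¹ B̂ D⁻¹) ·
(C (sI − A)⁻¹ B − Ĉ (sI − Â)⁻¹ B̂)`. -/
theorem relative_error_realization {n r m : ℕ}
    (A : Matrix (Fin n) (Fin n) ℂ) (B : Matrix (Fin n) (Fin m) ℂ)
    (C : Matrix (Fin m) (Fin n) ℂ)
    (Ahat : Matrix (Fin r) (Fin r) ℂ) (Bhat : Matrix (Fin r) (Fin m) ℂ)
    (Chat : Matrix (Fin m) (Fin r) ℂ) (D : Matrix (Fin m) (Fin m) ℂ)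
    (hD : IsUnit D)
    (Ai : Matrix (Fin r) (Fin r) ℂ) (Bi : Matrix (Fin r) (Fin m) ℂ)
    (Ci : Matrix (Fin m) (Fin r) ℂ) (Di : Matrix (Fin m) (Fin m) ℂ)
    (hAi : Ai = Ahat - Bhat * D⁻¹ * Chat) (hBi : Bi = -(Bhat * D⁻¹))
    (hCi : Ci = D⁻¹ * Chat) (hDi : Di = D⁻¹)
    (Arel : Matrix ((Fin n ⊕ Fin r) ⊕ Fin r) ((Fin n ⊕ Fin r) ⊕ Fin r) ℂ)
    (Brel : Matrix ((Fin n ⊕ Fin r) ⊕ Fin r) (Fin m) ℂ)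
    (Crel : Matrix (Fin m) ((Fin n ⊕ Fin r) ⊕ Fin r) ℂ)
    (hArel : Arel = Matrix.fromBlocks (Matrix.fromBlocks A 0 0 Ahat) 0
      (Matrix.fromCols (Bi * C) (-(Bi * Chat))) Ai)
    (hBrel : Brel = Matrix.fromRows (Matrix.fromRows B Bhat) 0)
    (hCrel : Crel = Matrix.fromCols (Matrix.fromCols (Di * C) (-(Di * Chat))) Ci)
    (s : ℂ)
    (hsA : IsUnit (s • (1 : Matrix (Fin n) (Fin n) ℂ) - A))
    (hsAhat : IsUnit (s • (1 : Matrix (Fin r) (Fin r) ℂ) - Ahat))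
    (hsAi : IsUnit (s • (1 : Matrix (Fin r) (Fin r) ℂ) - Ai))
    (hsArel : IsUnit (s • (1 : Matrix ((Fin n ⊕ Fin r) ⊕ Fin r) ((Fin n ⊕ Fin r) ⊕ Fin r) ℂ)
      - Arel)) :
    Crel * (s • (1 : Matrix ((Fin n ⊕ Fin r) ⊕ Fin r) ((Fin n ⊕ Fin r) ⊕ Fin r) ℂ) - Arel)⁻¹
        * Brel =
      (D⁻¹ - D⁻¹ * Chat * (s • (1 : Matrix (Fin r) (Fin r) ℂ) - Ai)⁻¹ * Bhat * D⁻¹) *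
        (C * (s • (1 : Matrix (Fin n) (Fin n) ℂ) - A)⁻¹ * B
          - Chat * (s • (1 : Matrix (Fin r) (Fin r) ℂ) - Ahat)⁻¹ * Bhat) :=
  relative_error_realization_general A B C Ahat Bhat Chat D Ai Bi Ci Di hBi hCi hDi Arel Brel Crel
    hArel hBrel hCrel s hsA hsAhat hsAi
end

section
/- Let A be an n×n real matrix, B an n×m real matrix, and t_d a real number. Assume the linear map sending an n×n real matrix X to A X + X Aᵀ is injective. If an n×n real matrix P satisfies A P + P Aᵀ + B Bᵀ − exp(A t_d) B Bᵀ exp(Aᵀ t_d) = 0, then P = ∫_0^{t_d} exp(Aτ) B Bᵀ exp(Aᵀτ) dτ. -/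
open Matrix NormedSpace

/-! The integrand `F τ = exp (τ A) B Bᵀ exp (τ Aᵀ)` of the gramian satisfies `F' = A F + F Aᵀ`, so
integrating over `[0, t_d]` gives `A G + G Aᵀ = F t_d - F 0 = exp (t_d A) B Bᵀ exp (t_d Aᵀ) - B Bᵀ` for
the gramian `G`. This is the equation satisfied by `P`, and the Lyapunov operator is injective. -/

theorem hasDerivAt_exp_smul_mul_mul_exp_smul_s16 {𝕂 𝔸 : Type*} [RCLike 𝕂] [NormedRing 𝔸]
    [NormedAlgebra 𝕂 𝔸] [CompleteSpace 𝔸] (A A' C : 𝔸) (t : 𝕂) :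
    HasDerivAt (fun s : 𝕂 => exp (s • A) * C * exp (s • A'))
      (A * (exp (t • A) * C * exp (t • A')) + exp (t • A) * C * exp (t • A') * A') t := by
  refine (((hasDerivAt_exp_smul_const' A t).mul_const C).mul
    (hasDerivAt_exp_smul_const A' t)).congr_deriv ?_
  simp only [mul_assoc]

section
variable {𝕜 : Type*} [RCLike 𝕜] {l m n : Type*} [Fintype n]

theorem HasDerivAt.matrix_elem {F : ℝ → Matrix m n 𝕜} {F' : Matrix m n 𝕜} {t : ℝ}
    (hF : HasDerivAt F F' t) (i : m) (j : n) : HasDerivAt (fun s => F s i j) (F' i j) t := by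
  have hF' : HasDerivAt (F : ℝ → m → n → 𝕜) F' t := hF
  exact hasDerivAt_pi.1 (hasDerivAt_pi.1 hF' i) j

namespace Matrix

variable {a b : ℝ}

theorem of_intervalIntegral_eq_sub_of_hasDerivAt {F F' : ℝ → Matrix m n 𝕜}
    (hF : ∀ t, HasDerivAt F (F' t) t) (hF' : Continuous F') :
    of (fun i j => ∫ t in a..b, F' t i j) = F b - F a := by
  ext i j
  exact intervalIntegral.integral_eq_sub_of_hasDerivAt (fun t _ => (hF t).matrix_elem i j)
    ((hF'.matrix_elem i j).intervalIntegrable a b)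

theorem mul_of_intervalIntegral (A : Matrix l n 𝕜) {F : ℝ → Matrix n m 𝕜} (hF : Continuous F) :
    A * of (fun i j => ∫ t in a..b, F t i j) = of fun i j => ∫ t in a..b, (A * F t) i j := by
  ext i j
  simp only [mul_apply, of_apply]
  rw [intervalIntegral.integral_finsetSum fun k _ =>
    ((hF.matrix_elem k j).const_mul _).intervalIntegrable a b]
  simp only [intervalIntegral.integral_const_mul]

theorem of_intervalIntegral_mul (A : Matrix n m 𝕜) {F : ℝ → Matrix l n 𝕜} (hF : Continuous F) :
    of (fun i j => ∫ t in a..b, F t i j) * A = of fun i j => ∫ t in a..b, (F t * A) i j := by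
  ext i j
  simp only [mul_apply, of_apply]
  rw [intervalIntegral.integral_finsetSum fun k _ =>
    ((hF.matrix_elem i k).mul_const _).intervalIntegrable a b]
  simp only [intervalIntegral.integral_mul_const]

theorem mul_of_intervalIntegral_add_of_intervalIntegral_mul_of_hasDerivAt
    {A A' : Matrix n n 𝕜} {F : ℝ → Matrix n n 𝕜}
    (hF : ∀ t, HasDerivAt F (A * F t + F t * A') t) :
    A * of (fun i j => ∫ t in a..b, F t i j) + of (fun i j => ∫ t in a..b, F t i j) * A' =
      F b - F a := by
  have hFc : Continuous F := continuous_matrix fun i j =>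
    continuous_iff_continuousAt.2 fun t => ((hF t).matrix_elem i j).continuousAt
  have hF'c : Continuous fun t => A * F t + F t * A' :=
    (continuous_const.matrix_mul hFc).add (hFc.matrix_mul continuous_const)
  rw [mul_of_intervalIntegral A hFc, of_intervalIntegral_mul A' hFc,
    ← of_intervalIntegral_eq_sub_of_hasDerivAt hF hF'c]
  ext i j
  exact (intervalIntegral.integral_add
    (((continuous_const.matrix_mul hFc).matrix_elem i j).intervalIntegrable a b)
    (((hFc.matrix_mul continuous_const).matrix_elem i j).intervalIntegrable a b)).symm

end Matrix
end

attribute [local instance] Matrix.linftyOpNormedRing Matrix.linftyOpNormedAlgebra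

/-- If the Lyapunov operator `X ↦ A X + X Aᵀ` is injective, then the unique solution of the
time-limited Lyapunov equation `A P + P Aᵀ + B Bᵀ − exp(A t_d) B Bᵀ exp(Aᵀ t_d) = 0` is the
time-limited controllability gramian `P = ∫_0^{t_d} exp(Aτ) B Bᵀ exp(Aᵀτ) dτ`. -/
theorem timeLimited_gramian_unique {n m : ℕ}
    (A : Matrix (Fin n) (Fin n) ℝ) (B : Matrix (Fin n) (Fin m) ℝ) (td : ℝ)
    (hinj : Function.Injective fun X : Matrix (Fin n) (Fin n) ℝ => A * X + X * Aᵀ)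
    (P : Matrix (Fin n) (Fin n) ℝ)
    (hP : A * P + P * Aᵀ + B * Bᵀ - NormedSpace.exp (td • A) * B * Bᵀ * NormedSpace.exp (td • Aᵀ) = 0) :
    P = Matrix.of fun i j =>
      ∫ τ in (0:ℝ)..td, (NormedSpace.exp (τ • A) * B * Bᵀ * NormedSpace.exp (τ • Aᵀ)) i j := by
  have hgramian := mul_of_intervalIntegral_add_of_intervalIntegral_mul_of_hasDerivAt
    (a := 0) (b := td) (hasDerivAt_exp_smul_mul_mul_exp_smul_s16 A Aᵀ (B * Bᵀ))
  have hlyap : A * P + P * Aᵀ = exp (td • A) * (B * Bᵀ) * exp (td • Aᵀ) -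
      exp ((0 : ℝ) • A) * (B * Bᵀ) * exp ((0 : ℝ) • Aᵀ) := by
    rw [zero_smul, zero_smul, exp_zero, Matrix.one_mul, Matrix.mul_one,
      eq_sub_iff_add_eq, ← sub_eq_zero, ← hP]
    simp only [Matrix.mul_assoc]
  simp only [Matrix.mul_assoc _ B Bᵀ]
  exact hinj (hlyap.trans hgramian.symm)
end
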